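/- Let X̂ be the random walk started at 1 with uniform steps in {-1,0,1}, M the associated martingale M_i = (f(X̂_i)/f(1))·∏_{j<i} w(X̂_j) with f(x)=x(x+3)(2x+3), w(x)=x(x+3)/((x+1)(x+2)), and X̃ the corresponding Doob transform. Then there exist constants C' > 0 and c > 0 such that for all i ≥ 1, K > 0 and λ > 0, P(X̃_i > K√(i log i)) ≤ C'·i⁴·exp(c i λ² − λ K √(i log i)); consequently, choosing λ = K√(log i)/(2c√i), P(X̃_i > K√(i log i)) ≤ C'·i^{4 − K²/(2c)}, and for K large enough, almost surely X̃_i ≤ K√(i log i) for all sufficiently large i. -/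
import Mathlib


open Filter Topology MeasureTheory

noncomputable def p (x : ℕ) : ℝ :=
  ((x : ℝ) + 4) * (2 * x + 5) / (3 * ((x : ℝ) + 2) * (2 * x + 3))

noncomputable def r (x : ℕ) : ℝ :=
  (x : ℝ) * ((x : ℝ) + 3) / (3 * ((x : ℝ) + 1) * ((x : ℝ) + 2))

noncomputable def q (x : ℕ) : ℝ :=
  ((x : ℝ) - 1) * (2 * x + 1) / (3 * ((x : ℝ) + 1) * (2 * x + 3))

/-- `Pn m x y` is the `m`-step transition probability of the Doob-transformed chain
`X̃` (the image of the walk `X̂` under the change of measure by the martingale `M`). -/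
noncomputable def Pn : ℕ → ℕ → ℕ → ℝ
  | 0, x, y => if x = y then 1 else 0
  | m + 1, x, y => p x * Pn m (x + 1) y + r x * Pn m x y + q x * Pn m (x - 1) y

/-- `tail i t = P(X̃_i > t)` for the chain started at `1`. -/
noncomputable def tail (i : ℕ) (t : ℝ) : ℝ :=
  ∑' y : ℕ, if t < (y : ℝ) then Pn i 1 y else 0

noncomputable def F (x : ℕ) : ℝ := (x : ℝ) * ((x : ℝ) + 3) * (2 * (x : ℝ) + 3)

lemma F_nonneg (x : ℕ) : 0 ≤ F x := by
  have : (0:ℝ) ≤ (x:ℝ) := Nat.cast_nonneg x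
  unfold F; positivity

lemma F_pos {x : ℕ} (hx : 1 ≤ x) : 0 < F x := by
  have h1 : (0:ℝ) < (x:ℝ) := by exact_mod_cast hx
  unfold F
  have h2 : (0:ℝ) < (x:ℝ) + 3 := by linarith
  have h3 : (0:ℝ) < 2*(x:ℝ) + 3 := by linarith
  exact mul_pos (mul_pos h1 h2) h3

lemma F_one : F 1 = 20 := by norm_num [F]

lemma F_mono {x y : ℕ} (h : x ≤ y) : F x ≤ F y := by
  have h' : (x:ℝ) ≤ (y:ℝ) := by exact_mod_cast h
  have hx : (0:ℝ) ≤ (x:ℝ) := Nat.cast_nonneg x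
  unfold F
  gcongr <;> linarith

lemma p_nonneg (x : ℕ) : 0 ≤ p x := by
  have : (0:ℝ) ≤ (x:ℝ) := Nat.cast_nonneg x
  unfold p; positivity

lemma r_nonneg (x : ℕ) : 0 ≤ r x := by
  have : (0:ℝ) ≤ (x:ℝ) := Nat.cast_nonneg x
  unfold r; positivity

lemma q_succ_nonneg (k : ℕ) : 0 ≤ q (k + 1) := by
  have : (0:ℝ) ≤ (k:ℝ) := Nat.cast_nonneg k
  unfold q; push_cast; apply div_nonneg <;> nlinarith

lemma q_one : q 1 = 0 := by norm_num [q]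

lemma hp (x : ℕ) : 3 * p x * F x ≤ F (x + 1) := by
  have hx : (0:ℝ) ≤ (x:ℝ) := Nat.cast_nonneg x
  have hd : (0:ℝ) < 3 * ((x:ℝ) + 2) * (2 * (x:ℝ) + 3) := by positivity
  have h1 : 3 * p x * F x = 3 * (((x : ℝ) + 4) * (2 * x + 5)) * F x / (3 * ((x:ℝ) + 2) * (2 * x + 3)) := by
    rw [p]; ring
  rw [h1, div_le_iff₀ hd, F, F]
  push_cast
  nlinarith [mul_nonneg hx hx, mul_nonneg (mul_nonneg hx hx) hx, mul_nonneg (mul_nonneg (mul_nonneg hx hx) hx) hx]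

lemma hr (x : ℕ) : 3 * r x * F x ≤ F x := by
  have hx : (0:ℝ) ≤ (x:ℝ) := Nat.cast_nonneg x
  have hd : (0:ℝ) < 3 * ((x:ℝ) + 1) * ((x:ℝ) + 2) := by positivity
  have h1 : 3 * r x * F x = 3 * ((x : ℝ) * ((x:ℝ) + 3)) * F x / (3 * ((x:ℝ) + 1) * ((x:ℝ) + 2)) := by
    rw [r]; ring
  rw [h1, div_le_iff₀ hd]
  have hF := F_nonneg x
  nlinarith [mul_nonneg hx hF, mul_nonneg (mul_nonneg hx hx) hF]

lemma hq (k : ℕ) : 3 * q (k + 1) * F (k + 1) ≤ F k := by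
  have hx : (0:ℝ) ≤ (k:ℝ) := Nat.cast_nonneg k
  have hd : (0:ℝ) < 3 * ((k:ℝ) + 2) * (2 * (k:ℝ) + 5) := by positivity
  have h1 : 3 * q (k + 1) * F (k + 1) =
      3 * ((k:ℝ) * (2 * (k:ℝ) + 3)) * F (k + 1) / (3 * ((k:ℝ) + 2) * (2 * (k:ℝ) + 5)) := by
    rw [q]; push_cast; ring
  rw [h1, div_le_iff₀ hd, F, F]
  push_cast
  nlinarith [mul_nonneg hx hx, mul_nonneg (mul_nonneg hx hx) hx, mul_nonneg (mul_nonneg (mul_nonneg hx hx) hx) hx]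

lemma pn_support : ∀ (m x y : ℕ), x + m < y → Pn m x y = 0 := by
  intro m
  induction m with
  | zero => intro x y h; simp only [Pn]; rw [if_neg]; omega
  | succ m ih =>
      intro x y h
      simp only [Pn]
      rw [ih (x+1) y (by omega), ih x y (by omega), ih (x-1) y (by omega)]
      ring

lemma pn_chernoff (l : ℝ) (hl : 0 ≤ l) : ∀ (m x y : ℕ), 1 ≤ x →
    Pn m x y ≤ F y / F x * Real.exp (l * ((x:ℝ) - (y:ℝ))) *
      ((Real.exp l + 1 + Real.exp (-l)) / 3) ^ m := by
  intro m
  induction m with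
  | zero =>
      intro x y hx
      simp only [Pn, pow_zero, mul_one]
      by_cases hxy : x = y
      · subst hxy
        rw [if_pos rfl, div_self (F_pos hx).ne', sub_self, mul_zero, Real.exp_zero, mul_one]
      · rw [if_neg hxy]
        have := F_nonneg y
        have := (F_pos hx)
        positivity
  | succ m ih =>
      intro x y hx
      obtain ⟨k, rfl⟩ : ∃ k, x = k + 1 := ⟨x - 1, by omega⟩
      have hA : (0:ℝ) < (Real.exp l + 1 + Real.exp (-l)) / 3 := by positivity
      set A : ℝ := (Real.exp l + 1 + Real.exp (-l)) / 3 with hAdef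
      have hAm : (0:ℝ) ≤ A ^ m := by positivity
      set E0 : ℝ := Real.exp (l * (((k:ℝ) + 1) - (y:ℝ))) with hE0def
      have hE0 : 0 < E0 := Real.exp_pos _
      have hFy := F_nonneg y
      have hFx := F_pos (show 1 ≤ k + 1 by omega)
      have hcast : ((k:ℝ) + 1) = ((k + 1 : ℕ) : ℝ) := by push_cast; ring
      -- p-term
      have hP : p (k+1) * Pn m (k+1+1) y ≤ F y / F (k+1) * E0 * A ^ m * (Real.exp l / 3) := by
        have hIH := ih (k+1+1) y (by omega)
        have hE1 : Real.exp (l * (((k+1+1 : ℕ):ℝ) - (y:ℝ))) = E0 * Real.exp l := by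
          rw [hE0def, ← Real.exp_add]; push_cast; ring_nf
        rw [hE1] at hIH
        have hF2 := F_pos (show 1 ≤ k + 2 by omega)
        calc p (k+1) * Pn m (k+1+1) y
            ≤ p (k+1) * (F y / F (k+1+1) * (E0 * Real.exp l) * A ^ m) :=
              mul_le_mul_of_nonneg_left hIH (p_nonneg _)
          _ = (p (k+1) * F y / F (k+1+1)) * (E0 * Real.exp l * A ^ m) := by ring
          _ ≤ (F y / (F (k+1) * 3)) * (E0 * Real.exp l * A ^ m) := by
              apply mul_le_mul_of_nonneg_right _ (by positivity)
              rw [div_le_div_iff₀ (by simpa using hF2) (by positivity)]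
              nlinarith [mul_le_mul_of_nonneg_right (hp (k+1)) hFy]
          _ = F y / F (k+1) * E0 * A ^ m * (Real.exp l / 3) := by ring
      -- r-term
      have hR : r (k+1) * Pn m (k+1) y ≤ F y / F (k+1) * E0 * A ^ m * (1 / 3) := by
        have hIH := ih (k+1) y (by omega)
        rw [show (((k+1 : ℕ):ℝ) - (y:ℝ)) = ((k:ℝ) + 1) - (y:ℝ) by push_cast; ring] at hIH
        calc r (k+1) * Pn m (k+1) y
            ≤ r (k+1) * (F y / F (k+1) * E0 * A ^ m) :=
              mul_le_mul_of_nonneg_left hIH (r_nonneg _)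
          _ = (r (k+1) * F y / F (k+1)) * (E0 * A ^ m) := by ring
          _ ≤ (F y / (F (k+1) * 3)) * (E0 * A ^ m) := by
              apply mul_le_mul_of_nonneg_right _ (by positivity)
              rw [div_le_div_iff₀ (by simpa using hFx) (by positivity)]
              nlinarith [mul_le_mul_of_nonneg_right (hr (k+1)) hFy]
          _ = F y / F (k+1) * E0 * A ^ m * (1 / 3) := by ring
      -- q-term
      have hQ : q (k+1) * Pn m (k+1-1) y ≤ F y / F (k+1) * E0 * A ^ m * (Real.exp (-l) / 3) := by
        rcases Nat.eq_zero_or_pos k with hk | hk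
        · subst hk
          rw [q_one, zero_mul]
          positivity
        · have hIH := ih (k+1-1) y (by omega)
          have hkk : k + 1 - 1 = k := by omega
          rw [hkk] at hIH ⊢
          have hE1 : Real.exp (l * (((k : ℕ):ℝ) - (y:ℝ))) = E0 * Real.exp (-l) := by
            rw [hE0def, ← Real.exp_add]; ring_nf
          rw [hE1] at hIH
          have hFk := F_pos hk
          calc q (k+1) * Pn m k y
              ≤ q (k+1) * (F y / F k * (E0 * Real.exp (-l)) * A ^ m) :=
                mul_le_mul_of_nonneg_left hIH (q_succ_nonneg _)
            _ = (q (k+1) * F y / F k) * (E0 * Real.exp (-l) * A ^ m) := by ring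
            _ ≤ (F y / (F (k+1) * 3)) * (E0 * Real.exp (-l) * A ^ m) := by
                apply mul_le_mul_of_nonneg_right _ (by positivity)
                rw [div_le_div_iff₀ hFk (by positivity)]
                nlinarith [mul_le_mul_of_nonneg_right (hq k) hFy, hFx]
            _ = F y / F (k+1) * E0 * A ^ m * (Real.exp (-l) / 3) := by ring
      have : Pn (m+1) (k+1) y = p (k+1) * Pn m (k+1+1) y + r (k+1) * Pn m (k+1) y
          + q (k+1) * Pn m (k+1-1) y := rfl
      rw [this]
      have hgoal : F y / F (k+1) * Real.exp (l * (((k+1 : ℕ):ℝ) - (y:ℝ))) * A ^ (m+1)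
          = F y / F (k+1) * E0 * A ^ m * (Real.exp l / 3)
            + F y / F (k+1) * E0 * A ^ m * (1 / 3)
            + F y / F (k+1) * E0 * A ^ m * (Real.exp (-l) / 3) := by
        rw [hE0def, pow_succ, hAdef]
        push_cast
        ring_nf
      rw [hgoal]
      linarith [hP, hR, hQ]


lemma tail_eq (i : ℕ) (t : ℝ) :
    tail i t = ∑ y ∈ Finset.range (i + 2), if t < (y : ℝ) then Pn i 1 y else 0 := by
  apply tsum_eq_sum
  intro y hy
  have h : 1 + i < y := by
    simp only [Finset.mem_range, not_lt] at hy; omega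
  simp [pn_support i 1 y h]

lemma A_le (l : ℝ) : (Real.exp l + 1 + Real.exp (-l)) / 3 ≤ Real.exp (l ^ 2 / 2) := by
  have h := Real.cosh_le_exp_half_sq l
  rw [Real.cosh_eq] at h
  nlinarith [Real.one_le_exp (show (0:ℝ) ≤ l ^ 2 / 2 by positivity)]

lemma tail_le (i : ℕ) (hi : 1 ≤ i) (t : ℝ) (l : ℝ) (hl : 0 ≤ l) :
    tail i t ≤ 21 / 2 * (i:ℝ) ^ 4 * Real.exp (l * (1 - t)) *
      ((Real.exp l + 1 + Real.exp (-l)) / 3) ^ i := by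
  have hA : (0:ℝ) < (Real.exp l + 1 + Real.exp (-l)) / 3 := by positivity
  set A : ℝ := (Real.exp l + 1 + Real.exp (-l)) / 3 with hAdef
  set D : ℝ := F (i + 1) / 20 * Real.exp (l * (1 - t)) * A ^ i with hDdef
  have hD : 0 ≤ D := by
    have := F_nonneg (i+1); positivity
  have hterm : ∀ y ∈ Finset.range (i + 2), (if t < (y : ℝ) then Pn i 1 y else 0) ≤ D := by
    intro y hy
    split_ifs with hty
    · calc Pn i 1 y ≤ F y / F 1 * Real.exp (l * ((1:ℝ) - (y:ℝ))) * A ^ i := by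
            have := pn_chernoff l hl i 1 y le_rfl
            simpa using this
        _ ≤ D := by
            rw [hDdef, F_one]
            have e1 : F y / 20 ≤ F (i+1) / 20 := by
              have := F_mono (show y ≤ i + 1 by simp only [Finset.mem_range] at hy; omega)
              linarith
            have e2 : Real.exp (l * ((1:ℝ) - (y:ℝ))) ≤ Real.exp (l * (1 - t)) := by
              apply Real.exp_le_exp.mpr
              nlinarith [mul_le_mul_of_nonneg_left hty.le hl]
            have hAi : (0:ℝ) ≤ A ^ i := by positivity
            have h20 : (0:ℝ) ≤ F (i+1) / 20 := by have := F_nonneg (i+1); linarith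
            exact mul_le_mul_of_nonneg_right
              (mul_le_mul e1 e2 (Real.exp_pos _).le h20) hAi
    · exact hD
  calc tail i t ≤ ∑ _y ∈ Finset.range (i + 2), D := by
        rw [tail_eq]; exact Finset.sum_le_sum hterm
    _ = (i + 2 : ℕ) * D := by
        rw [Finset.sum_const, Finset.card_range, nsmul_eq_mul]
    _ ≤ 21 / 2 * (i:ℝ) ^ 4 * Real.exp (l * (1 - t)) * A ^ i := by
        have hi' : (1:ℝ) ≤ (i:ℝ) := by exact_mod_cast hi
        have hE : (0:ℝ) < Real.exp (l * (1 - t)) := Real.exp_pos _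
        have hAi : (0:ℝ) < A ^ i := by positivity
        have hF : F (i + 1) ≤ 70 * (i:ℝ) ^ 3 := by
          rw [F]; push_cast; nlinarith [sq_nonneg ((i:ℝ))]
        have hcard : ((i + 2 : ℕ) : ℝ) ≤ 3 * (i:ℝ) := by push_cast; linarith
        have hFnn := F_nonneg (i + 1)
        rw [hDdef]
        have h1 : ((i + 2 : ℕ) : ℝ) * (F (i+1) / 20) ≤ 21 / 2 * (i:ℝ) ^ 4 := by
          calc ((i + 2 : ℕ) : ℝ) * (F (i+1) / 20) ≤ (3 * (i:ℝ)) * (70 * (i:ℝ)^3 / 20) := by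
                gcongr
            _ = 21 / 2 * (i:ℝ) ^ 4 := by ring
        calc ((i + 2 : ℕ):ℝ) * (F (i + 1) / 20 * Real.exp (l * (1 - t)) * A ^ i)
            = (((i + 2 : ℕ):ℝ) * (F (i+1) / 20)) * (Real.exp (l * (1 - t)) * A ^ i) := by ring
          _ ≤ (21 / 2 * (i:ℝ) ^ 4) * (Real.exp (l * (1 - t)) * A ^ i) :=
              mul_le_mul_of_nonneg_right h1 (by positivity)
          _ = 21 / 2 * (i:ℝ) ^ 4 * Real.exp (l * (1 - t)) * A ^ i := by ring

lemma tail_master (i : ℕ) (hi : 1 ≤ i) (t : ℝ) (l : ℝ) (hl : 0 ≤ l) :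
    tail i t ≤ 18 * (i:ℝ) ^ 4 * Real.exp ((i:ℝ) * l ^ 2 - l * t) := by
  have h1 := tail_le i hi t l hl
  have hi' : (1:ℝ) ≤ (i:ℝ) := by exact_mod_cast hi
  have hA : (0:ℝ) ≤ (Real.exp l + 1 + Real.exp (-l)) / 3 := by positivity
  have h2 : ((Real.exp l + 1 + Real.exp (-l)) / 3) ^ i ≤ Real.exp ((i:ℝ) * (l ^ 2 / 2)) := by
    calc ((Real.exp l + 1 + Real.exp (-l)) / 3) ^ i ≤ (Real.exp (l ^ 2 / 2)) ^ i :=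
          pow_le_pow_left₀ hA (A_le l) i
      _ = Real.exp ((i:ℝ) * (l ^ 2 / 2)) := by
          rw [← Real.exp_nat_mul]
  have h3 : Real.exp (l * (1 - t)) * Real.exp ((i:ℝ) * (l ^ 2 / 2))
      ≤ Real.exp (1/2) * Real.exp ((i:ℝ) * l ^ 2 - l * t) := by
    rw [← Real.exp_add, ← Real.exp_add]
    apply Real.exp_le_exp.mpr
    nlinarith [sq_nonneg (l - 1), sq_nonneg l]
  have hexp : Real.exp (1/2 : ℝ) ≤ 12 / 7 := by
    nlinarith [Real.exp_one_lt_d9, Real.exp_pos (1/2 : ℝ),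
      Real.exp_add (1/2 : ℝ) (1/2 : ℝ), Real.exp_pos (1:ℝ)]
  calc tail i t ≤ 21 / 2 * (i:ℝ) ^ 4 * Real.exp (l * (1 - t)) *
        ((Real.exp l + 1 + Real.exp (-l)) / 3) ^ i := h1
    _ ≤ 21 / 2 * (i:ℝ) ^ 4 * (Real.exp (1/2) * Real.exp ((i:ℝ) * l ^ 2 - l * t)) := by
        have h4 : Real.exp (l * (1 - t)) * ((Real.exp l + 1 + Real.exp (-l)) / 3) ^ i
            ≤ Real.exp (1/2) * Real.exp ((i:ℝ) * l ^ 2 - l * t) := by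
          calc Real.exp (l * (1 - t)) * ((Real.exp l + 1 + Real.exp (-l)) / 3) ^ i
              ≤ Real.exp (l * (1 - t)) * Real.exp ((i:ℝ) * (l ^ 2 / 2)) := by
                exact mul_le_mul_of_nonneg_left h2 (Real.exp_pos _).le
            _ ≤ _ := h3
        calc 21 / 2 * (i:ℝ) ^ 4 * Real.exp (l * (1 - t)) *
              ((Real.exp l + 1 + Real.exp (-l)) / 3) ^ i
            = 21 / 2 * (i:ℝ) ^ 4 * (Real.exp (l * (1 - t)) *
              ((Real.exp l + 1 + Real.exp (-l)) / 3) ^ i) := by ring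
          _ ≤ _ := mul_le_mul_of_nonneg_left h4 (by positivity)
    _ ≤ 21 / 2 * (i:ℝ) ^ 4 * (12 / 7 * Real.exp ((i:ℝ) * l ^ 2 - l * t)) := by
        have hE : (0:ℝ) < Real.exp ((i:ℝ) * l ^ 2 - l * t) := Real.exp_pos _
        gcongr
    _ = 18 * (i:ℝ) ^ 4 * Real.exp ((i:ℝ) * l ^ 2 - l * t) := by ring

lemma meas_tail {Ω : Type} [MeasurableSpace Ω] (μ : Measure Ω) [IsProbabilityMeasure μ]
    (Y : ℕ → Ω → ℕ) (hm : ∀ i, Measurable (Y i))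
    (hlaw : ∀ i y, (μ {ω | Y i ω = y}).toReal = Pn i 1 y) (i : ℕ) (t : ℝ) :
    (μ {ω | t < ((Y i ω : ℕ) : ℝ)}).toReal = tail i t := by
  have hms : ∀ y : ℕ, MeasurableSet {ω | Y i ω = y ∧ t < (y:ℝ)} := by
    intro y
    have : {ω | Y i ω = y ∧ t < (y:ℝ)} = (Y i ⁻¹' {y}) ∩ {_ω : Ω | t < (y:ℝ)} := by
      ext ω; simp [Set.mem_setOf_eq]
    rw [this]
    exact (hm i (measurableSet_singleton y)).inter (MeasurableSet.const _)
  have hdisj : Pairwise (Function.onFun Disjoint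
      (fun y : ℕ => {ω | Y i ω = y ∧ t < (y:ℝ)})) := by
    intro y y' hyy
    simp only [Function.onFun]
    rw [Set.disjoint_left]
    rintro ω ⟨h1, -⟩ ⟨h2, -⟩
    exact hyy (h1 ▸ h2 ▸ rfl)
  have hU : (⋃ y : ℕ, {ω | Y i ω = y ∧ t < (y:ℝ)}) = {ω | t < ((Y i ω : ℕ) : ℝ)} := by
    ext ω
    simp only [Set.mem_iUnion, Set.mem_setOf_eq]
    constructor
    · rintro ⟨y, rfl, h2⟩; exact h2
    · intro h; exact ⟨Y i ω, rfl, h⟩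
  rw [← hU, measure_iUnion hdisj hms, ENNReal.tsum_toReal_eq (fun y => measure_ne_top μ _)]
  apply tsum_congr
  intro y
  split_ifs with h
  · rw [show {ω | Y i ω = y ∧ t < (y:ℝ)} = {ω | Y i ω = y} by ext ω; simp [h]]
    exact hlaw i y
  · rw [show {ω | Y i ω = y ∧ t < (y:ℝ)} = ∅ by ext ω; simp [h]]
    simp

lemma goal2 (i : ℕ) (hi : 1 ≤ i) (K : ℝ) (hK : 0 < K) :
    tail i (K * Real.sqrt (i * Real.log i)) ≤ 18 * (i:ℝ) ^ ((4 : ℝ) - K ^ 2 / (2 * 2)) := by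
  rcases eq_or_lt_of_le hi with hi1 | hi2
  · -- i = 1
    have hi1' : i = 1 := hi1.symm
    subst hi1'
    have ht : K * Real.sqrt ((1:ℕ) * Real.log (1:ℕ)) = 0 := by
      norm_num [Real.log_one]
    rw [ht]
    have h := tail_le 1 le_rfl 0 0 le_rfl
    simp only [Real.exp_zero, Nat.cast_one] at h
    norm_num at h
    have : (18:ℝ) * (1:ℝ) ^ ((4 : ℝ) - K ^ 2 / (2 * 2)) = 18 := by
      rw [Real.one_rpow]; ring
    rw [Nat.cast_one, this]
    linarith
  · -- i ≥ 2
    have hi2' : 2 ≤ i := hi2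
    have ipos : (0:ℝ) < (i:ℝ) := by exact_mod_cast Nat.pos_of_ne_zero (by omega)
    have hgt1 : (1:ℝ) < (i:ℝ) := by exact_mod_cast hi2'
    have hL : 0 < Real.log i := Real.log_pos hgt1
    have hiL : (0:ℝ) ≤ (i:ℝ) * Real.log i := by positivity
    set t : ℝ := K * Real.sqrt (i * Real.log i) with htdef
    have ht : 0 < t := by
      apply mul_pos hK
      exact Real.sqrt_pos.mpr (by positivity)
    set l : ℝ := t / (2 * i) with hldef
    have hl : 0 ≤ l := by positivity
    have h := tail_master i hi t l hl
    have hsq : t ^ 2 = K ^ 2 * ((i:ℝ) * Real.log i) := by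
      rw [htdef, mul_pow, Real.sq_sqrt hiL]
    have hexp : (i:ℝ) * l ^ 2 - l * t = -(K ^ 2 * Real.log i) / 4 := by
      rw [hldef]
      field_simp
      nlinarith [hsq]
    rw [hexp] at h
    apply h.trans
    have e1 : (i:ℝ) ^ (4:ℕ) = Real.exp (Real.log i * 4) := by
      rw [← Real.rpow_natCast (i:ℝ) 4, Real.rpow_def_of_pos ipos]
      norm_num
    have e2 : (i:ℝ) ^ ((4 : ℝ) - K ^ 2 / (2 * 2)) =
        Real.exp (Real.log i * 4) * Real.exp (-(K ^ 2 * Real.log i) / 4) := by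
      rw [Real.rpow_def_of_pos ipos, ← Real.exp_add]
      congr 1
      ring
    rw [e1, e2]
    exact le_of_eq (by ring)


/-- Gaussian-type tail bounds for the chain `X̃` started at `1`: there are constants
`C' > 0`, `c > 0` with `P(X̃_i > K√(i log i)) ≤ C' i⁴ exp(c i λ² − λ K √(i log i))`
for all `i ≥ 1`, `K > 0`, `λ > 0`; consequently (taking `λ = K√(log i)/(2c√i)`)
`P(X̃_i > K√(i log i)) ≤ C' i^{4−K²/(2c)}`, and for `K` large enough, almost surely
`X̃_i ≤ K√(i log i)` for all sufficiently large `i`. -/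
theorem stmt_18 :
    ∃ C' > (0 : ℝ), ∃ c > (0 : ℝ),
      (∀ i : ℕ, 1 ≤ i → ∀ K > (0 : ℝ), ∀ l > (0 : ℝ),
        tail i (K * Real.sqrt (i * Real.log i))
          ≤ C' * (i : ℝ) ^ 4 * Real.exp (c * i * l ^ 2 - l * K * Real.sqrt (i * Real.log i))) ∧
      (∀ i : ℕ, 1 ≤ i → ∀ K > (0 : ℝ),
        tail i (K * Real.sqrt (i * Real.log i))
          ≤ C' * (i : ℝ) ^ ((4 : ℝ) - K ^ 2 / (2 * c))) ∧
      (∃ K₀ > (0 : ℝ), ∀ K ≥ K₀,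
        ∀ (Ω : Type) (mΩ : MeasurableSpace Ω) (μ : Measure Ω), IsProbabilityMeasure μ →
          ∀ Y : ℕ → Ω → ℕ, (∀ i, Measurable (Y i)) →
            (∀ i y, (μ {ω | Y i ω = y}).toReal = Pn i 1 y) →
            ∀ᵐ ω ∂μ, ∀ᶠ i in atTop, (Y i ω : ℝ) ≤ K * Real.sqrt (i * Real.log i)) := by
  refine ⟨18, by norm_num, 2, by norm_num, ?_, ?_, ?_⟩
  · -- goal 1
    intro i hi K hK l hl
    have h := tail_master i hi (K * Real.sqrt (i * Real.log i)) l hl.le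
    apply h.trans
    have h2 : Real.exp ((i:ℝ) * l ^ 2 - l * (K * Real.sqrt (i * Real.log i)))
        ≤ Real.exp (2 * i * l ^ 2 - l * K * Real.sqrt (i * Real.log i)) := by
      apply Real.exp_le_exp.mpr
      have : (0:ℝ) ≤ (i:ℝ) * l ^ 2 := by positivity
      nlinarith
    calc 18 * (i:ℝ) ^ 4 * Real.exp ((i:ℝ) * l ^ 2 - l * (K * Real.sqrt (i * Real.log i)))
        ≤ 18 * (i:ℝ) ^ 4 * Real.exp (2 * i * l ^ 2 - l * K * Real.sqrt (i * Real.log i)) :=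
          mul_le_mul_of_nonneg_left h2 (by positivity)
      _ = 18 * (i:ℝ) ^ 4 * Real.exp (2 * i * l ^ 2 - l * K * Real.sqrt (i * Real.log i)) := rfl
  · -- goal 2
    intro i hi K hK
    exact goal2 i hi K hK
  · -- goal 3
    refine ⟨6, by norm_num, ?_⟩
    intro K hK Ω mΩ μ hμ Y hm hlaw
    have hK0 : (0:ℝ) < K := by linarith
    set S : ℕ → Set Ω := fun i => {ω | K * Real.sqrt (i * Real.log i) < ((Y i ω : ℕ) : ℝ)}
      with hS
    have hval : ∀ i, (μ (S i)).toReal = tail i (K * Real.sqrt (i * Real.log i)) := fun i =>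
      meas_tail μ Y hm hlaw i _
    have hbound : ∀ i : ℕ, 1 ≤ i → (μ (S i)).toReal ≤ 18 * (i:ℝ) ^ (-(2:ℝ)) := by
      intro i hi
      rw [hval i]
      calc tail i (K * Real.sqrt (i * Real.log i))
          ≤ 18 * (i:ℝ) ^ ((4:ℝ) - K ^ 2 / (2 * 2)) := goal2 i hi K hK0
        _ ≤ 18 * (i:ℝ) ^ (-(2:ℝ)) := by
            have hi1 : (1:ℝ) ≤ (i:ℝ) := by exact_mod_cast hi
            have hexp : (4:ℝ) - K ^ 2 / (2 * 2) ≤ -(2:ℝ) := by nlinarith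
            have := Real.rpow_le_rpow_of_exponent_le hi1 hexp
            linarith
    have hsum : Summable (fun i => (μ (S i)).toReal) := by
      rw [← summable_nat_add_iff 1]
      apply Summable.of_nonneg_of_le (fun n => ENNReal.toReal_nonneg)
        (fun n => hbound (n + 1) (by omega))
      exact (summable_nat_add_iff (f := fun n : ℕ => 18 * (n:ℝ) ^ (-(2:ℝ))) 1).mpr
        ((Real.summable_nat_rpow.mpr (by norm_num)).mul_left 18)
    have hne : (∑' i, μ (S i)) ≠ ⊤ := by
      have h1 : ∀ i, μ (S i) = ENNReal.ofReal ((μ (S i)).toReal) := fun i =>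
        (ENNReal.ofReal_toReal (measure_ne_top μ _)).symm
      calc (∑' i, μ (S i)) = ∑' i, ENNReal.ofReal ((μ (S i)).toReal) := tsum_congr h1
        _ = ENNReal.ofReal (∑' i, (μ (S i)).toReal) :=
            (ENNReal.ofReal_tsum_of_nonneg (fun i => ENNReal.toReal_nonneg) hsum).symm
        _ ≠ ⊤ := ENNReal.ofReal_ne_top
    filter_upwards [ae_eventually_notMem hne] with ω hω
    filter_upwards [hω] with i hi
    exact not_lt.mp hi
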